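/- In the Lax-pair setup, fix k ≤ s ≤ N−1. Let m_s and m_{s+1} be the solutions of the discrete Riemann–Hilbert problems on {π_0,…,π_{s−1}} and {π_0,…,π_s} with jump matrices w(π_x) = [[0, ω(x)],[0,0]] and asymptotics m_s(ζ)·diag(ζ^{−k},ζ^{k}) → I, m_{s+1}(ζ)·diag(ζ^{−k},ζ^{k}) → I as ζ → ∞. Let A_s = [[p_s, q_s],[r_s, −p_s]] be the matrix with A_s² = 0 and m_{s+1}(ζ) = (I + (ζ−π_s)^{−1}A_s)·m_s(ζ), and let M_s be the entire extension of ζ ↦ m_s(σζ)·D(ζ)·m_{s+1}(ζ)^{−1}, D(ζ) = diag(d_1(ζ), d_2(ζ)). Denote by μ^{ij} the entries of M_s(π_{s+1}). If p_s ≠ 0 (so also q_s ≠ 0), then (m_{s+1}(π_{s+1}))_{11} = d_2(π_{s+1})^{−1}·(μ^{22} + (p_s/q_s)·μ^{12})·(m_s(π_s))_{11}. -/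

import Mathlib

open Filter Topology Matrix Polynomial

noncomputable section

/-- 2×2 complex matrices. -/
abbrev Mat2 : Type := Matrix (Fin 2) (Fin 2) ℂ

/-- Entrywise complex differentiability (= analyticity) of a matrix-valued function on a set. -/
def EntryDiffOn (m : ℂ → Mat2) (U : Set ℂ) : Prop :=
  ∀ i j, DifferentiableOn ℂ (fun ζ => m ζ i j) U

/-- `m` solves the discrete Riemann–Hilbert problem `(Z, w)`: `m` is analytic off `Z`, has at
most a simple pole at each `x ∈ Z` (i.e. `ζ ↦ (ζ - x) • m ζ` extends analytically to a
neighbourhood of `x`), and the value at `x` of this extension (the residue of `m` at `x`)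
equals the limit of `m(ζ) * w(x)` as `ζ → x`. -/
def SolvesDRHP (Z : Finset ℂ) (w : ℂ → Mat2) (m : ℂ → Mat2) : Prop :=
  EntryDiffOn m ((Z : Set ℂ))ᶜ ∧
  ∀ x ∈ Z, ∃ g : ℂ → Mat2,
    EntryDiffOn g (((Z : Set ℂ))ᶜ ∪ {x}) ∧
    (∀ ζ, ζ ∉ (Z : Set ℂ) → g ζ = (ζ - x) • m ζ) ∧
    Filter.Tendsto (fun ζ => m ζ * w x) (𝓝[≠] x) (𝓝 (g x))

/-- The asymptotic condition `m(ζ) · diag(ζ^{-k}, ζ^k) → I` as `ζ → ∞`. -/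
def AsympId (k : ℕ) (m : ℂ → Mat2) : Prop :=
  Filter.Tendsto (fun ζ : ℂ => m ζ * Matrix.diagonal ![ζ⁻¹ ^ k, ζ ^ k])
    (Bornology.cobounded ℂ) (𝓝 1)

/-- The finite set `{π 0, …, π (s-1)}` regarded as a finite subset of `ℂ`. -/
def Zset (π : ℕ → ℝ) (s : ℕ) : Finset ℂ :=
  (Finset.range s).image fun x => (π x : ℂ)

/-!
The determinant of a solution whose jumps are the nilpotent matrices `!![0, a; 0, 0]` has
removable singularities at the nodes and tends to `1` at infinity, so `det m_s ≡ 1` by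
Liouville; with `det (1 + t A_s) = 1` this gives `det m_{s+1}(π_{s+1}) = 1`. The residue
condition of `m_{s+1}` at `π_s` forces the pole term `A_s m_s(π_s) w(π_s)` to vanish, i.e.
`p_s m_s^{11}(π_s) + q_s m_s^{21}(π_s) = 0`. Since `σ π_{s+1} = π_s`, we have
`M_s(π_{s+1}) = m_s(π_s) D(π_{s+1}) m_{s+1}(π_{s+1})⁻¹`; inverting by the adjugate and
eliminating `m_s^{21}(π_s)` with the kernel relation gives the recurrence.
-/

section Neighbourhoods

variable {X : Type*} [TopologicalSpace X] [T1Space X]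

lemma Finset.compl_mem_nhds {Z : Finset X} {x : X} (hx : x ∉ Z) : (Z : Set X)ᶜ ∈ 𝓝 x :=
  Z.finite_toSet.isClosed.compl_mem_nhds hx

lemma Finset.compl_union_singleton_mem_nhds (Z : Finset X) (x : X) :
    (Z : Set X)ᶜ ∪ {x} ∈ 𝓝 x := by
  rw [Set.union_comm, ← Set.compl_sdiff]
  exact (Z.finite_toSet.sdiff).isClosed.compl_mem_nhds fun h => h.2 rfl

lemma Finset.eventually_notMem_nhdsNE (Z : Finset X) (x : X) :
    ∀ᶠ ζ in 𝓝[≠] x, ζ ∉ (Z : Set X) := by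
  filter_upwards [self_mem_nhdsWithin,
    mem_nhdsWithin_of_mem_nhds (Z.compl_union_singleton_mem_nhds x)] with ζ hne hζ
  exact hζ.resolve_right hne

end Neighbourhoods

section EntryDiffOn

variable {m : ℂ → Mat2} {U : Set ℂ}

lemma EntryDiffOn.continuousAt (hm : EntryDiffOn m U) {x : ℂ} (hU : U ∈ 𝓝 x) :
    ContinuousAt m x :=
  continuousAt_pi.2 fun i => continuousAt_pi.2 fun j => ((hm i j).differentiableAt hU).continuousAt

lemma EntryDiffOn.det (hm : EntryDiffOn m U) : DifferentiableOn ℂ (fun ζ => (m ζ).det) U := by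
  simp only [Matrix.det_fin_two]
  exact ((hm 0 0).mul (hm 1 1)).sub ((hm 0 1).mul (hm 1 0))

end EntryDiffOn

lemma residue_columns {m g : ℂ → Mat2} {x a : ℂ}
    (hg : ∀ i j, DifferentiableAt ℂ (fun ζ => g ζ i j) x)
    (hgm : ∀ᶠ ζ in 𝓝[≠] x, g ζ = (ζ - x) • m ζ)
    (hlim : Tendsto (fun ζ => m ζ * !![0, a; 0, 0]) (𝓝[≠] x) (𝓝 (g x))) (i : Fin 2) :
    g x i 0 = 0 ∧ g x i 1 = deriv (fun ζ => g ζ i 0) x * a := by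
  have hentry (j : Fin 2) :
      Tendsto (fun ζ => (m ζ * !![0, a; 0, 0]) i j) (𝓝[≠] x) (𝓝 (g x i j)) :=
    (hlim.apply_nhds i).apply_nhds j
  have hcol0 : g x i 0 = 0 :=
    tendsto_nhds_unique (hentry 0) (by simp [Matrix.mul_apply])
  refine ⟨hcol0, tendsto_nhds_unique (hentry 1) ?_⟩
  have hslope : Tendsto (fun ζ => dslope (fun z => g z i 0) x ζ * a) (𝓝[≠] x)
      (𝓝 (deriv (fun ζ => g ζ i 0) x * a)) := by
    have := tendsto_nhdsWithin_of_tendsto_nhds (s := {x}ᶜ)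
      (continuousAt_dslope_same.2 (hg i 0)).tendsto
    rw [dslope_same] at this
    exact this.mul_const a
  refine hslope.congr' ?_
  filter_upwards [self_mem_nhdsWithin, hgm] with ζ hne hζ
  rw [dslope_of_ne _ hne, slope_def_field, hζ, hcol0]
  simp [Matrix.mul_apply, mul_div_cancel_left₀ _ (sub_ne_zero.2 hne)]

lemma hasDerivAt_det_zero_of_residue_columns {g : ℂ → Mat2} {x a : ℂ}
    (hg : ∀ i j, DifferentiableAt ℂ (fun ζ => g ζ i j) x)
    (hcol : ∀ i, g x i 0 = 0 ∧ g x i 1 = deriv (fun ζ => g ζ i 0) x * a) :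
    HasDerivAt (fun ζ => (g ζ).det) 0 x := by
  simp only [Matrix.det_fin_two]
  refine (((hg 0 0).hasDerivAt.mul (hg 1 1).hasDerivAt).sub
    ((hg 0 1).hasDerivAt.mul (hg 1 0).hasDerivAt)).congr_deriv ?_
  rw [(hcol 0).1, (hcol 1).1, (hcol 0).2, (hcol 1).2]
  ring

/-- `det m = det g / (ζ - x)²`, and `det g` has a double zero at `x` by `residue_columns`. -/
lemma SolvesDRHP.exists_det_extension {Z : Finset ℂ} {w m : ℂ → Mat2} (hm : SolvesDRHP Z w m)
    {x : ℂ} (hx : x ∈ Z) {a : ℂ} (hwx : w x = !![0, a; 0, 0]) :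
    ∃ h : ℂ → ℂ, DifferentiableOn ℂ h ((Z : Set ℂ)ᶜ ∪ {x}) ∧
      Set.EqOn h (fun ζ => (m ζ).det) (Z : Set ℂ)ᶜ := by
  obtain ⟨g, hgdiff, hgm, hlim⟩ := hm.2 x hx
  have hU := Z.compl_union_singleton_mem_nhds x
  have hgx (i j : Fin 2) : DifferentiableAt ℂ (fun ζ => g ζ i j) x :=
    (hgdiff i j).differentiableAt hU
  have hgm' : ∀ᶠ ζ in 𝓝[≠] x, g ζ = (ζ - x) • m ζ := by
    filter_upwards [Z.eventually_notMem_nhdsNE x] with ζ hζ using hgm ζ hζ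
  rw [hwx] at hlim
  have hcol := residue_columns hgx hgm' hlim
  set f : ℂ → ℂ := fun ζ => (g ζ).det
  have hfx : f x = 0 := by simp [f, Matrix.det_fin_two, (hcol 0).1, (hcol 1).1]
  have hf' : deriv f x = 0 := (hasDerivAt_det_zero_of_residue_columns hgx hcol).deriv
  refine ⟨dslope (dslope f x) x, ?_, fun ζ hζ => ?_⟩
  · rw [Complex.differentiableOn_dslope hU, Complex.differentiableOn_dslope hU]
    exact hgdiff.det
  · have hne : ζ - x ≠ 0 := sub_ne_zero.2 fun h => hζ (h ▸ hx)
    simp only [dslope_of_ne _ (sub_ne_zero.1 hne), slope_def_field, dslope_same, hf', hfx, f,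
      hgm ζ hζ, Matrix.det_smul, Fintype.card_fin]
    field_simp
    ring

lemma Finset.exists_differentiable_eqOn_compl {E : Type*} [NormedAddCommGroup E]
    [NormedSpace ℂ E] {Z : Finset ℂ} {f : ℂ → E} (hf : DifferentiableOn ℂ f (Z : Set ℂ)ᶜ)
    (hloc : ∀ x ∈ Z, ∃ h : ℂ → E, DifferentiableOn ℂ h ((Z : Set ℂ)ᶜ ∪ {x}) ∧
      Set.EqOn h f (Z : Set ℂ)ᶜ) :
    ∃ F : ℂ → E, Differentiable ℂ F ∧ Set.EqOn F f (Z : Set ℂ)ᶜ := by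
  classical
  choose! h hhdiff hhf using hloc
  refine ⟨fun ζ => if ζ ∈ Z then h ζ ζ else f ζ, fun z => ?_, fun ζ hζ => if_neg hζ⟩
  by_cases hz : z ∈ Z
  · have hU := Z.compl_union_singleton_mem_nhds z
    refine ((hhdiff z hz).differentiableAt hU).congr_of_eventuallyEq ?_
    filter_upwards [hU] with ζ hζ
    rcases hζ with hζ | rfl
    · rw [if_neg (show ζ ∉ Z from hζ), hhf z hz hζ]
    · rw [if_pos hz]
  · have hU := Z.compl_mem_nhds hz
    refine (hf.differentiableAt hU).congr_of_eventuallyEq ?_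
    filter_upwards [hU] with ζ hζ using if_neg hζ

lemma AsympId.tendsto_det {k : ℕ} {m : ℂ → Mat2} (hm : AsympId k m) :
    Tendsto (fun ζ => (m ζ).det) (Bornology.cobounded ℂ) (𝓝 1) := by
  have hdet : Continuous (Matrix.det : Mat2 → ℂ) := continuous_id.matrix_det
  have h := (hdet.tendsto 1).comp hm
  rw [Matrix.det_one] at h
  refine h.congr' ?_
  filter_upwards [(Set.finite_singleton (0 : ℂ)).isBounded.compl] with ζ hζ
  have hζ0 : ζ ≠ 0 := hζ
  simp [Matrix.det_diagonal, Fin.prod_univ_two, hζ0]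

lemma SolvesDRHP.det_eq_one {Z : Finset ℂ} {w m : ℂ → Mat2} (hm : SolvesDRHP Z w m)
    (hw : ∀ x ∈ Z, ∃ a, w x = !![0, a; 0, 0]) {k : ℕ} (hma : AsympId k m)
    (ζ : ℂ) (hζ : ζ ∉ (Z : Set ℂ)) : (m ζ).det = 1 := by
  obtain ⟨F, hF, hFm⟩ := Z.exists_differentiable_eqOn_compl hm.1.det fun x hx =>
    have ⟨a, hwx⟩ := hw x hx
    hm.exists_det_extension hx hwx
  have hF1 : Tendsto F (Bornology.cobounded ℂ) (𝓝 1) := by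
    refine hma.tendsto_det.congr' ?_
    filter_upwards [Z.finite_toSet.isBounded.compl] with z hz using (hFm hz).symm
  rw [show (m ζ).det = F ζ from (hFm hζ).symm]
  exact hF.apply_eq_of_tendsto_cocompact ζ (Metric.cobounded_eq_cocompact (α := ℂ) ▸ hF1)

/-- `(ζ - x) m' W` tends to `0`, and it equals `(ζ - x) m W + A m W`. -/
lemma mul_mul_eq_zero_of_tendsto_one_add_inv_smul_mul {n : Type*} [Fintype n] [DecidableEq n]
    {m m' : ℂ → Matrix n n ℂ} {A W L : Matrix n n ℂ} {x : ℂ} (hm : ContinuousAt m x)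
    (hrel : ∀ᶠ ζ in 𝓝[≠] x, m' ζ = (1 + (ζ - x)⁻¹ • A) * m ζ)
    (hlim : Tendsto (fun ζ => m' ζ * W) (𝓝[≠] x) (𝓝 L)) : A * m x * W = 0 := by
  have hsub : Tendsto (fun ζ : ℂ => ζ - x) (𝓝[≠] x) (𝓝 0) :=
    tendsto_nhdsWithin_of_tendsto_nhds (by simpa using (continuous_sub_right x).tendsto x)
  have hzero := hsub.smul hlim
  rw [zero_smul] at hzero
  have hpole : Tendsto (fun ζ => (ζ - x) • (m ζ * W) + A * m ζ * W) (𝓝[≠] x)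
      (𝓝 (A * m x * W)) := by
    have hmx := tendsto_nhdsWithin_of_tendsto_nhds (s := {x}ᶜ) hm.tendsto
    simpa using (hsub.smul (hmx.mul_const W)).add ((hmx.const_mul A).mul_const W)
  refine tendsto_nhds_unique hpole (hzero.congr' ?_)
  filter_upwards [self_mem_nhdsWithin, hrel] with ζ hne hζ
  rw [hζ, add_mul, one_mul, add_mul, smul_add, smul_mul_assoc, smul_mul_assoc, smul_smul,
    mul_inv_cancel₀ (sub_ne_zero.2 hne), one_smul]

lemma det_one_add_smul_of_mul_self_add_mul_eq_zero {p q r : ℂ} (h : p * p + q * r = 0) (t : ℂ) :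
    (1 + t • !![p, q; r, -p]).det = 1 := by
  rw [Matrix.det_fin_two]
  simp only [one_fin_two, smul_of, smul_cons, smul_eq_mul, smul_empty, mul_neg, Matrix.add_apply,
    of_apply, cons_val', cons_val_zero, cons_val_fin_one, cons_val_one, zero_add]
  linear_combination (-t ^ 2) * h

lemma entry_recurrence_of_first_column_kernel (P n : Mat2) {p q d₁ d₂ : ℂ} (hq : q ≠ 0)
    (hd₂ : d₂ ≠ 0) (hn : n.det ≠ 0) (hdet : P.det = n.det)
    (hker : p * P 0 0 + q * P 1 0 = 0) :
    n 0 0 = d₂⁻¹ * ((P * diagonal ![d₁, d₂] * n⁻¹) 1 1 +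
      p / q * (P * diagonal ![d₁, d₂] * n⁻¹) 0 1) * P 0 0 := by
  rw [Matrix.inv_def, Ring.inverse_eq_inv', Matrix.adjugate_fin_two]
  simp only [Matrix.det_fin_two] at hdet hn ⊢
  simp only [smul_of, smul_cons, smul_eq_mul, mul_neg, smul_empty, Matrix.mul_apply,
    Fin.sum_univ_two, of_apply, cons_val', cons_val_one, cons_val_fin_one, cons_val_zero,
    diagonal_apply_eq, ne_eq, one_ne_zero, zero_ne_one, not_false_eq_true, diagonal_apply_ne,
    mul_zero, add_zero, zero_add]
  field_simp
  linear_combination (d₁ * n 0 1 * P 0 0 - n 0 0 * d₂ * P 0 1) * hker - n 0 0 * d₂ * q * hdet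

section Zset

variable {π : ℕ → ℝ} {N : ℕ}

lemma coe_mem_Zset {x t : ℕ} (h : x < t) : (π x : ℂ) ∈ Zset π t :=
  Finset.mem_image_of_mem _ (Finset.mem_range.2 h)

lemma coe_notMem_Zset (hπ : ∀ i ≤ N, ∀ j ≤ N, π i = π j → i = j) {t u : ℕ} (hu : u ≤ N)
    (htu : t ≤ u) : (π u : ℂ) ∉ (Zset π t : Set ℂ) := by
  simp only [Zset, Finset.coe_image, Finset.coe_range, Set.mem_image, Set.mem_Iio, not_exists,
    not_and]
  intro x hx hxu
  have := hπ x (by omega) u hu (by exact_mod_cast hxu)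
  omega

lemma exists_nilpotent_jump_of_mem_Zset {ω : ℕ → ℝ} {w : ℂ → Mat2}
    (hw : ∀ x ≤ N, w (π x : ℂ) = !![0, (ω x : ℂ); 0, 0]) {t : ℕ} (ht : t ≤ N + 1) :
    ∀ z ∈ Zset π t, ∃ a, w z = !![0, a; 0, 0] := by
  simp only [Zset, Finset.forall_mem_image, Finset.mem_range]
  exact fun x hx => ⟨_, hw x (by omega)⟩

end Zset

theorem stmt6_general (N k s : ℕ) (hsN : s + 1 ≤ N)
    (π ω : ℕ → ℝ)
    (hπ : ∀ i ≤ N, ∀ j ≤ N, π i = π j → i = j)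
    (hω : ∀ x ≤ N, 0 < ω x)
    (η : ℂ)
    (σ : ℂ → ℂ)
    (hσπ : ∀ x < N, σ (π (x + 1) : ℂ) = (π x : ℂ))
    (d₁ d₂ : ℂ → ℂ)
    (hd : ∀ x, 1 ≤ x → x ≤ N → d₂ (π x : ℂ) ≠ 0 ∧
      (ω (x - 1) : ℂ) / (ω x : ℂ) = η * d₁ (π x : ℂ) / d₂ (π x : ℂ))
    (w : ℂ → Mat2) (hw : ∀ x ≤ N, w (π x : ℂ) = !![0, (ω x : ℂ); 0, 0])
    (m m' : ℂ → Mat2)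
    (hm : SolvesDRHP (Zset π s) w m) (hma : AsympId k m)
    (hm' : SolvesDRHP (Zset π (s + 1)) w m')
    (p q r : ℂ)
    (hA2 : !![p, q; r, -p] * !![p, q; r, -p] = 0)
    (hrel : ∀ ζ : ℂ, ζ ∉ (Zset π (s + 1) : Set ℂ) →
      m' ζ = (1 + (ζ - (π s : ℂ))⁻¹ • !![p, q; r, -p]) * m ζ)
    (M : ℂ → Mat2)
    (hMeq : ∀ ζ : ℂ, ζ ∉ (Zset π (s + 1) : Set ℂ) →
      M ζ = m (σ ζ) * Matrix.diagonal ![d₁ ζ, d₂ ζ] * (m' ζ)⁻¹)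
    (hp : p ≠ 0) :
    m' (π (s + 1) : ℂ) 0 0 =
      (d₂ (π (s + 1) : ℂ))⁻¹ *
        (M (π (s + 1) : ℂ) 1 1 + p / q * M (π (s + 1) : ℂ) 0 1) *
        m (π s : ℂ) 0 0 := by
  have hpq : p * p + q * r = 0 := by
    simpa [Matrix.mul_apply, Fin.sum_univ_two] using congrFun₂ hA2 0 0
  have hq : q ≠ 0 := fun hq => hp (mul_self_eq_zero.1 (by simpa [hq] using hpq))
  have hdet := hm.det_eq_one (exists_nilpotent_jump_of_mem_Zset hw (by omega)) hma
  have hπs : (π s : ℂ) ∉ (Zset π s : Set ℂ) := coe_notMem_Zset hπ (by omega) le_rfl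
  have hπs1 : (π (s + 1) : ℂ) ∉ (Zset π (s + 1) : Set ℂ) := coe_notMem_Zset hπ hsN le_rfl
  have hdet' : (m' (π (s + 1))).det = 1 := by
    rw [hrel _ hπs1, Matrix.det_mul, det_one_add_smul_of_mul_self_add_mul_eq_zero hpq,
      hdet _ (coe_notMem_Zset hπ hsN (by omega)), one_mul]
  have hker : p * m (π s) 0 0 + q * m (π s) 1 0 = 0 := by
    obtain ⟨g, -, -, hlim⟩ := hm'.2 _ (coe_mem_Zset (Nat.lt_succ_self s))
    have hpole := mul_mul_eq_zero_of_tendsto_one_add_inv_smul_mul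
      (hm.1.continuousAt ((Zset π s).compl_mem_nhds hπs))
      ((Finset.eventually_notMem_nhdsNE _ _).mono hrel) hlim
    rw [hw s (by omega)] at hpole
    have h01 : (p * m (π s) 0 0 + q * m (π s) 1 0) * ω s = 0 := by
      simpa [Matrix.mul_apply, Matrix.vecMul, dotProduct, Fin.sum_univ_two] using
        congrFun₂ hpole 0 1
    exact (mul_eq_zero.1 h01).resolve_right (by exact_mod_cast (hω s (by omega)).ne')
  rw [hMeq _ hπs1, hσπ s (by omega)]
  exact entry_recurrence_of_first_column_kernel _ _ hq (hd (s + 1) (by omega) hsN).1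
    (by rw [hdet']; exact one_ne_zero) (by rw [hdet', hdet _ hπs]) hker

/-- the recurrence for the `(1,1)` matrix elements,
`m_{s+1}^{11} = d₂(π_{s+1})⁻¹ (μ²² + (p/q) μ¹²) m_s^{11}`. -/
theorem stmt6 (N k s : ℕ) (hk1 : 1 ≤ k) (hks : k ≤ s) (hsN : s + 1 ≤ N)
    (π ω : ℕ → ℝ)
    (hπ : ∀ i ≤ N, ∀ j ≤ N, π i = π j → i = j)
    (hω : ∀ x ≤ N, 0 < ω x)
    (η c₀ : ℂ) (hη : η ≠ 0)
    (σ : ℂ → ℂ) (hσ : ∀ ζ, σ ζ = η * ζ + c₀)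
    (hσπ : ∀ x < N, σ (π (x + 1) : ℂ) = (π x : ℂ))
    (d₁ d₂ : ℂ → ℂ) (hd₁ : Differentiable ℂ d₁) (hd₂ : Differentiable ℂ d₂)
    (hd₁0 : d₁ (π 0 : ℂ) = 0)
    (hd : ∀ x, 1 ≤ x → x ≤ N → d₂ (π x : ℂ) ≠ 0 ∧
      (ω (x - 1) : ℂ) / (ω x : ℂ) = η * d₁ (π x : ℂ) / d₂ (π x : ℂ))
    (w : ℂ → Mat2) (hw : ∀ x ≤ N, w (π x : ℂ) = !![0, (ω x : ℂ); 0, 0])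
    (m m' : ℂ → Mat2)
    (hm : SolvesDRHP (Zset π s) w m) (hma : AsympId k m)
    (hm' : SolvesDRHP (Zset π (s + 1)) w m') (hm'a : AsympId k m')
    (p q r : ℂ)
    (hA2 : !![p, q; r, -p] * !![p, q; r, -p] = 0)
    (hrel : ∀ ζ : ℂ, ζ ∉ (Zset π (s + 1) : Set ℂ) →
      m' ζ = (1 + (ζ - (π s : ℂ))⁻¹ • !![p, q; r, -p]) * m ζ)
    (M : ℂ → Mat2) (hMdiff : ∀ i j, Differentiable ℂ fun ζ => M ζ i j)
    (hMeq : ∀ ζ : ℂ, ζ ∉ (Zset π (s + 1) : Set ℂ) →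
      M ζ = m (σ ζ) * Matrix.diagonal ![d₁ ζ, d₂ ζ] * (m' ζ)⁻¹)
    (hp : p ≠ 0) :
    m' (π (s + 1) : ℂ) 0 0 =
      (d₂ (π (s + 1) : ℂ))⁻¹ *
        (M (π (s + 1) : ℂ) 1 1 + p / q * M (π (s + 1) : ℂ) 0 1) *
        m (π s : ℂ) 0 0 :=
  stmt6_general N k s hsN π ω hπ hω η σ hσπ d₁ d₂ hd w hw m m' hm hma hm' p q r hA2 hrel M hMeq hp
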